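/- arXiv:2106.08054 — 2 statements merged into one kernel-verified Lean document; each statement's English description precedes it below -/
import Mathlib

section
/- (Sewing Lemma) Let g : [0,T]² → ℝ be continuous with g_{t,t} = 0 for all t, and suppose that the 3-increment δ₂g, defined by (δ₂g)_{t₁,t₂,t₃} = −g_{t₂,t₃} + g_{t₁,t₃} − g_{t₁,t₂}, satisfies ‖δ₂g‖_μ < ∞ for some μ > 1, where ‖h‖_μ := inf{ Σ_i ‖h^i‖_{ρ_i, μ−ρ_i} : h = Σ_i h^i, 0 < ρ_i < μ } and ‖h‖_{α,β} := sup_{s,u,t ∈ [0,T]} |h_{t,u,s}| / (|u−s|^α |t−s|^β). Then there exist a continuous function I : [0,T] → ℝ, unique up to an additive constant, and a function ℛ : [0,T]² → ℝ with sup_{s,t} |ℛ_{s,t}|/|t−s|^μ < ∞, such that g_{s,t} = I_t − I_s + ℛ_{s,t} for all s,t ∈ [0,T]. -/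
open Set

/-- Quotients `|h t u s| / (|u-s|^α |t-s|^β)` of a three-parameter function on `[0,T]³`
(with the convention `0/0 = 0`, which is Lean's division by zero). -/
def threeParQuotSet (α β T : ℝ) (h : ℝ → ℝ → ℝ → ℝ) : Set ℝ :=
  {q | ∃ s ∈ Set.Icc (0:ℝ) T, ∃ u ∈ Set.Icc (0:ℝ) T, ∃ t ∈ Set.Icc (0:ℝ) T,
    q = |h t u s| / (|u - s| ^ α * |t - s| ^ β)}

open Filter Topology

/-!
Along a uniform partition of `[s, s + jΔ]` into `j` steps, the sum of `g` differs from
`g s (s + jΔ)` by `O((jΔ)^μ)`: splitting the steps into two halves costs one increment `δ₂g`,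
and since `μ > 1` the two halves together cost only a fraction `(2/3)^(μ-1)` of `(jΔ)^μ`.
Consequently the sums of `g` along the dyadic grids `2⁻ⁿℕ ∩ [0, t]` converge geometrically
fast, and their limit `I t` satisfies `g s t - (I t - I s) = O(|t - s|^μ)`. Continuity of `I`
comes from that of `g`, and two such `I` differ by a function `F` with
`|F b - F a| = O(|b - a|^μ)`; summing over a grid of mesh `Δ` bounds `|F t - F 0|` by
`O(Δ^(μ-1)) → 0`, so `F` is constant.
-/

lemma Real.rpow_add_rpow_le_mul_rpow {a b c μ : ℝ} (ha : 0 ≤ a) (hb : 0 ≤ b) (hc : 0 ≤ c)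
    (hμ : 1 ≤ μ) (hac : a ≤ c * (a + b)) (hbc : b ≤ c * (a + b)) :
    a ^ μ + b ^ μ ≤ c ^ (μ - 1) * (a + b) ^ μ := by
  have hsplit : ∀ x : ℝ, 0 ≤ x → x ^ μ = x * x ^ (μ - 1) := fun x hx => by
    rw [← Real.rpow_one_add' hx (by linarith), add_sub_cancel]
  have hle : ∀ x : ℝ, 0 ≤ x → x ≤ c * (a + b) →
      x ^ μ ≤ x * (c ^ (μ - 1) * (a + b) ^ (μ - 1)) := fun x hx hxc => by
    rw [hsplit x hx, ← Real.mul_rpow hc (by positivity)]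
    gcongr
  calc a ^ μ + b ^ μ ≤ a * (c ^ (μ - 1) * (a + b) ^ (μ - 1))
        + b * (c ^ (μ - 1) * (a + b) ^ (μ - 1)) := add_le_add (hle a ha hac) (hle b hb hbc)
    _ = c ^ (μ - 1) * ((a + b) * (a + b) ^ (μ - 1)) := by ring
    _ = c ^ (μ - 1) * (a + b) ^ μ := by rw [hsplit _ (by positivity)]

section Sewing

variable {E : Type*} [NormedAddCommGroup E] {g : ℝ → ℝ → E} {T μ K C : ℝ}

/-- `g s t - g s u - g u t` is the increment `(δ₂g)_{s,u,t}`; it is only controlled when `u` is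
at least as close to `t` as `s` is. -/
def SewingBound (g : ℝ → ℝ → E) (T μ K : ℝ) : Prop :=
  ∀ s ∈ Icc (0:ℝ) T, ∀ u ∈ Icc (0:ℝ) T, ∀ t ∈ Icc (0:ℝ) T, |u - t| ≤ |s - t| →
    ‖g s t - g s u - g u t‖ ≤ K * |s - t| ^ μ

lemma sum_range_add_uniform (f : ℝ → ℝ → E) (s Δ : ℝ) (q d : ℕ) :
    ∑ k ∈ Finset.range (q + d), f (s + k * Δ) (s + (k + 1) * Δ)
      = ∑ k ∈ Finset.range q, f (s + k * Δ) (s + (k + 1) * Δ)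
        + ∑ k ∈ Finset.range d, f (s + q * Δ + k * Δ) (s + q * Δ + (k + 1) * Δ) := by
  rw [Finset.sum_range_add]
  congr 1
  refine Finset.sum_congr rfl fun k _ => ?_
  push_cast
  congr 1 <;> ring

namespace SewingBound

lemma norm_le_of_le (hg : SewingBound g T μ K) {s u t : ℝ} (hs : 0 ≤ s) (hsu : s ≤ u)
    (hut : u ≤ t) (ht : t ≤ T) : ‖g s t - g s u - g u t‖ ≤ K * (t - s) ^ μ := by
  have h := hg s ⟨hs, by linarith⟩ u ⟨by linarith, by linarith⟩ t ⟨by linarith, ht⟩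
    (by rw [abs_of_nonpos (by linarith), abs_of_nonpos (by linarith)]; linarith)
  rwa [abs_of_nonpos (by linarith : s - t ≤ 0), neg_sub] at h

/-- Splitting `j` steps into two halves of at most `2j/3` steps each costs one increment, whence
the condition `(2/3)^(μ-1) C + K ≤ C` on the constant. -/
lemma norm_sum_uniform_sub_le (hg : SewingBound g T μ K)
    (hdiag : ∀ t ∈ Icc (0:ℝ) T, g t t = 0) (hμ : 1 < μ) (hC0 : 0 ≤ C)
    (hC : (2/3 : ℝ) ^ (μ - 1) * C + K ≤ C) (j : ℕ) {s Δ : ℝ} (hs : 0 ≤ s) (hΔ : 0 ≤ Δ)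
    (hsT : s + j * Δ ≤ T) :
    ‖∑ k ∈ Finset.range j, g (s + k * Δ) (s + (k + 1) * Δ) - g s (s + j * Δ)‖
      ≤ C * (j * Δ) ^ μ := by
  induction j using Nat.strong_induction_on generalizing s with
  | _ j ih =>
  rcases Nat.lt_or_ge j 2 with hj | hj
  · interval_cases j
    · simp [hdiag s ⟨hs, by simpa using hsT⟩, Real.zero_rpow (by positivity : μ ≠ 0)]
    · simpa using mul_nonneg hC0 (Real.rpow_nonneg hΔ μ)
  obtain ⟨q, q', rfl, hq, hq', hqq', hq'q⟩ : ∃ q q', j = q + q' ∧ 0 < q ∧ 0 < q' ∧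
      q ≤ 2 * q' ∧ q' ≤ 2 * q := ⟨j / 2, j - j / 2, by omega, by omega, by omega, by omega,
      by omega⟩
  have hqR : (q : ℝ) ≤ 2 * q' := by exact_mod_cast hqq'
  have hq'R : (q' : ℝ) ≤ 2 * q := by exact_mod_cast hq'q
  set u := s + q * Δ
  have hut : u + q' * Δ = s + ↑(q + q') * Δ := by push_cast; ring
  have h₁ := ih q (by omega) hs (by push_cast at hsT; nlinarith)
  have h₂ := ih q' (by omega) (s := u) (by positivity) (by rw [hut]; exact hsT)
  have h₃ := hg.norm_le_of_le (u := u) hs (le_add_of_nonneg_right (by positivity))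
    (by rw [← hut]; linarith [mul_nonneg (Nat.cast_nonneg q') hΔ]) hsT
  rw [hut] at h₂
  have hconv := Real.rpow_add_rpow_le_mul_rpow (mul_nonneg (Nat.cast_nonneg q) hΔ)
    (mul_nonneg (Nat.cast_nonneg q') hΔ) (by norm_num : (0:ℝ) ≤ 2/3) hμ.le
    (by nlinarith) (by nlinarith)
  have hlen : (q : ℝ) * Δ + q' * Δ = ↑(q + q') * Δ := by push_cast; ring
  rw [hlen] at hconv
  have hst : s + ↑(q + q') * Δ - s = ↑(q + q') * Δ := by ring
  rw [hst] at h₃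
  calc ‖∑ k ∈ Finset.range (q + q'), g (s + k * Δ) (s + (k + 1) * Δ) - g s (s + ↑(q + q') * Δ)‖
      = ‖(∑ k ∈ Finset.range q, g (s + k * Δ) (s + (k + 1) * Δ) - g s u)
          + (∑ k ∈ Finset.range q', g (u + k * Δ) (u + (k + 1) * Δ) - g u (s + ↑(q + q') * Δ))
          - (g s (s + ↑(q + q') * Δ) - g s u - g u (s + ↑(q + q') * Δ))‖ := by
        rw [sum_range_add_uniform]; congr 1; abel
    _ ≤ C * (q * Δ) ^ μ + C * (q' * Δ) ^ μ + K * (↑(q + q') * Δ) ^ μ :=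
        (norm_sub_le _ _).trans (add_le_add ((norm_add_le _ _).trans (add_le_add h₁ h₂)) h₃)
    _ ≤ ((2/3 : ℝ) ^ (μ - 1) * C + K) * (↑(q + q') * Δ) ^ μ := by nlinarith
    _ ≤ C * (↑(q + q') * Δ) ^ μ := by gcongr

end SewingBound

noncomputable def gridSum (g : ℝ → ℝ → E) (Δ t : ℝ) : E :=
  ∑ k ∈ Finset.range ⌊t / Δ⌋₊, g (k * Δ) ((k + 1) * Δ) + g (⌊t / Δ⌋₊ * Δ) t

lemma Nat.floor_div_mul_le {t Δ : ℝ} (ht : 0 ≤ t) (hΔ : 0 < Δ) : ⌊t / Δ⌋₊ * Δ ≤ t :=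
  (le_div_iff₀ hΔ).1 (Nat.floor_le (div_nonneg ht hΔ.le))

lemma Nat.lt_floor_div_add_one_mul (t : ℝ) {Δ : ℝ} (hΔ : 0 < Δ) : t < (⌊t / Δ⌋₊ + 1) * Δ :=
  (div_lt_iff₀ hΔ).1 (Nat.lt_floor_add_one _)

namespace SewingBound

lemma norm_gridSum_sub_gridSum_sub_le (hg : SewingBound g T μ K)
    (hdiag : ∀ t ∈ Icc (0:ℝ) T, g t t = 0) (hμ : 1 < μ) (hK : 0 ≤ K) (hC0 : 0 ≤ C)
    (hC : (2/3 : ℝ) ^ (μ - 1) * C + K ≤ C) {Δ s t : ℝ} (hΔ : 0 < Δ) (hs : 0 ≤ s) (hst : s ≤ t)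
    (ht : t ≤ T) :
    ‖gridSum g Δ t - gridSum g Δ s - g s t‖ ≤ (C + 2 * K) * (t - s + Δ) ^ μ := by
  set m := ⌊s / Δ⌋₊
  set n := ⌊t / Δ⌋₊
  obtain ⟨d, hd⟩ : ∃ d, n = m + d :=
    Nat.exists_eq_add_of_le (Nat.floor_le_floor (div_le_div_of_nonneg_right hst hΔ.le))
  have hms : m * Δ ≤ s := Nat.floor_div_mul_le hs hΔ
  have hsm : s < (m + 1) * Δ := Nat.lt_floor_div_add_one_mul s hΔ
  have hnt : n * Δ ≤ t := Nat.floor_div_mul_le (hs.trans hst) hΔ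
  have hmn : m * Δ + d * Δ = n * Δ := by rw [hd]; push_cast; ring
  have hsum : ∑ k ∈ Finset.range n, g (k * Δ) ((k + 1) * Δ)
      = ∑ k ∈ Finset.range m, g (k * Δ) ((k + 1) * Δ)
        + ∑ k ∈ Finset.range d, g (m * Δ + k * Δ) (m * Δ + (k + 1) * Δ) := by
    simpa only [hd, zero_add] using sum_range_add_uniform g 0 Δ m d
  have hwidth : t - m * Δ ≤ t - s + Δ := by linarith
  have hpow : ∀ {x : ℝ}, 0 ≤ x → x ≤ t - m * Δ → x ^ μ ≤ (t - s + Δ) ^ μ := fun hx hxt =>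
    Real.rpow_le_rpow hx (hxt.trans hwidth) (by linarith)
  have hd_le : C * (d * Δ) ^ μ ≤ C * (t - s + Δ) ^ μ :=
    mul_le_mul_of_nonneg_left (hpow (by positivity) (by linarith)) hC0
  have hm_le : K * (t - m * Δ) ^ μ ≤ K * (t - s + Δ) ^ μ :=
    mul_le_mul_of_nonneg_left (hpow (by linarith) le_rfl) hK
  have hm0 : 0 ≤ (m : ℝ) * Δ := by positivity
  have hmain := hg.norm_sum_uniform_sub_le hdiag hμ hC0 hC d hm0 hΔ.le (by linarith)
  rw [hmn] at hmain
  have hδn := hg.norm_le_of_le hm0 (by linarith [mul_nonneg (Nat.cast_nonneg d) hΔ.le]) hnt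
    (by linarith)
  have hδs := hg.norm_le_of_le hm0 hms hst ht
  calc ‖gridSum g Δ t - gridSum g Δ s - g s t‖
      = ‖(∑ k ∈ Finset.range d, g (m * Δ + k * Δ) (m * Δ + (k + 1) * Δ) - g (m * Δ) (n * Δ))
          - (g (m * Δ) t - g (m * Δ) (n * Δ) - g (n * Δ) t)
          + (g (m * Δ) t - g (m * Δ) s - g s t)‖ := by
        rw [gridSum, gridSum, hsum]; congr 1; abel
    _ ≤ C * (d * Δ) ^ μ + K * (t - m * Δ) ^ μ + K * (t - m * Δ) ^ μ :=
        (norm_add_le _ _).trans (add_le_add ((norm_sub_le _ _).trans (add_le_add hmain hδn)) hδs)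
    _ ≤ (C + 2 * K) * (t - s + Δ) ^ μ := by linarith

end SewingBound

lemma norm_sub_sub_gridSum_le {F : ℝ → E} {Δ t ε : ℝ} (hΔ : 0 < Δ) (ht : 0 ≤ t)
    (hF : ∀ a b, 0 ≤ a → a ≤ b → b ≤ t → b - a ≤ Δ → ‖F b - F a - g a b‖ ≤ ε) :
    ‖F t - F 0 - gridSum g Δ t‖ ≤ (⌊t / Δ⌋₊ + 1) * ε := by
  set m := ⌊t / Δ⌋₊
  have hmt : m * Δ ≤ t := Nat.floor_div_mul_le ht hΔ
  have htm : t - m * Δ ≤ Δ := by linarith [Nat.lt_floor_div_add_one_mul t hΔ]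
  have hstep : ∀ k ∈ Finset.range m,
      ‖F ((k + 1) * Δ) - F (k * Δ) - g (k * Δ) ((k + 1) * Δ)‖ ≤ ε := fun k hk => by
    have hk : (k : ℝ) + 1 ≤ m := by exact_mod_cast Finset.mem_range.1 hk
    exact hF _ _ (by positivity) (by linarith) (by nlinarith) (by linarith)
  have htel : F t - F 0 - gridSum g Δ t
      = ∑ k ∈ Finset.range m, (F ((k + 1) * Δ) - F (k * Δ) - g (k * Δ) ((k + 1) * Δ))
        + (F t - F (m * Δ) - g (m * Δ) t) := by
    have h := Finset.sum_range_sub (fun k : ℕ => F (k * Δ)) m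
    push_cast at h
    rw [Finset.sum_sub_distrib, h, gridSum, zero_mul]
    abel
  calc ‖F t - F 0 - gridSum g Δ t‖ ≤ m * ε + ε := by
        rw [htel]
        refine norm_add_le_of_le ((norm_sum_le _ _).trans ?_)
          (hF _ _ (by positivity) hmt le_rfl htm)
        simpa using Finset.sum_le_sum hstep
    _ = (m + 1) * ε := by ring

lemma floor_div_add_one_mul_rpow_le {t Δ A : ℝ} (ht : 0 ≤ t) (hΔ : 0 < Δ) (hA : 0 ≤ A) :
    (⌊t / Δ⌋₊ + 1) * (A * Δ ^ μ) ≤ A * (t + Δ) * Δ ^ (μ - 1) := by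
  have hpow : Δ ^ μ = Δ * Δ ^ (μ - 1) := by
    conv_lhs => rw [show μ = 1 + (μ - 1) by ring, Real.rpow_add hΔ, Real.rpow_one]
  have hm : (⌊t / Δ⌋₊ + 1) * Δ ≤ t + Δ := by
    linarith [Nat.floor_div_mul_le ht hΔ]
  rw [hpow]
  calc (⌊t / Δ⌋₊ + 1) * (A * (Δ * Δ ^ (μ - 1))) = A * ((⌊t / Δ⌋₊ + 1) * Δ) * Δ ^ (μ - 1) := by
        ring
    _ ≤ A * (t + Δ) * Δ ^ (μ - 1) := by gcongr

namespace SewingBound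

lemma norm_gridSum_half_sub_gridSum_le (hg : SewingBound g T μ K)
    (hdiag : ∀ t ∈ Icc (0:ℝ) T, g t t = 0) (hμ : 1 < μ) (hK : 0 ≤ K) (hC0 : 0 ≤ C)
    (hC : (2/3 : ℝ) ^ (μ - 1) * C + K ≤ C) {Δ t : ℝ} (hΔ : 0 < Δ) (ht : 0 ≤ t) (htT : t ≤ T) :
    ‖gridSum g (Δ / 2) t - gridSum g Δ t‖ ≤ (C + 2 * K) * 2 ^ μ * (t + Δ) * Δ ^ (μ - 1) := by
  have h0 : gridSum g (Δ / 2) 0 = 0 := by simp [gridSum, hdiag 0 ⟨le_rfl, ht.trans htT⟩]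
  have hF : ∀ a b, 0 ≤ a → a ≤ b → b ≤ t → b - a ≤ Δ →
      ‖gridSum g (Δ / 2) b - gridSum g (Δ / 2) a - g a b‖ ≤ (C + 2 * K) * 2 ^ μ * Δ ^ μ := by
    intro a b ha hab hbt hba
    refine (hg.norm_gridSum_sub_gridSum_sub_le hdiag hμ hK hC0 hC (half_pos hΔ) ha hab
      (hbt.trans htT)).trans ?_
    rw [mul_assoc, ← Real.mul_rpow (by norm_num) hΔ.le]
    have : 0 ≤ C + 2 * K := by positivity
    gcongr
    linarith
  have h := norm_sub_sub_gridSum_le hΔ ht hF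
  rw [h0, sub_zero] at h
  exact h.trans (floor_div_add_one_mul_rpow_le ht hΔ (by positivity))

theorem exists_norm_sub_sub_le_of_le [CompleteSpace E] (hg : SewingBound g T μ K)
    (hdiag : ∀ t ∈ Icc (0:ℝ) T, g t t = 0) (hμ : 1 < μ) (hK : 0 ≤ K) :
    ∃ (I : ℝ → E) (C : ℝ), ∀ s t, 0 ≤ s → s ≤ t → t ≤ T →
      ‖g s t - (I t - I s)‖ ≤ C * (t - s) ^ μ := by
  have hθ : (2/3 : ℝ) ^ (μ - 1) < 1 := Real.rpow_lt_one (by norm_num) (by norm_num) (by linarith)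
  set C := K / (1 - (2/3 : ℝ) ^ (μ - 1))
  have hC0 : 0 ≤ C := div_nonneg hK (by linarith)
  have hC : (2/3 : ℝ) ^ (μ - 1) * C + K ≤ C := by
    have : C * (1 - (2/3 : ℝ) ^ (μ - 1)) = K := div_mul_cancel₀ _ (by linarith)
    linarith
  have hΔ : ∀ n : ℕ, 0 < (1/2 : ℝ) ^ n := fun n => by positivity
  have hcauchy : ∀ t, 0 ≤ t → t ≤ T → CauchySeq fun n => gridSum g ((1/2 : ℝ) ^ n) t :=
    fun t ht htT => cauchySeq_of_le_geometric ((1/2 : ℝ) ^ (μ - 1)) ((C + 2 * K) * 2 ^ μ * (T + 1))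
      (Real.rpow_lt_one (by norm_num) (by norm_num) (by linarith)) fun n => by
        rw [dist_comm, dist_eq_norm, pow_succ, ← div_eq_mul_one_div]
        refine (hg.norm_gridSum_half_sub_gridSum_le hdiag hμ hK hC0 hC (hΔ n) ht htT).trans ?_
        rw [← Real.rpow_pow_comm (by norm_num)]
        have : (1/2 : ℝ) ^ n ≤ 1 := pow_le_one₀ (by norm_num) (by norm_num)
        gcongr
  refine ⟨fun t => limUnder atTop fun n => gridSum g ((1/2 : ℝ) ^ n) t, C + 2 * K,
    fun s t hs hst htT => ?_⟩
  have hlim := fun t ht htT => (hcauchy t ht htT).tendsto_limUnder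
  have hL := (((hlim t (hs.trans hst) htT).sub (hlim s hs (hst.trans htT))).sub
    (tendsto_const_nhds (x := g s t))).norm
  have hR : Tendsto (fun n : ℕ => (C + 2 * K) * (t - s + (1/2 : ℝ) ^ n) ^ μ) atTop
      (𝓝 ((C + 2 * K) * (t - s) ^ μ)) := by
    have hmesh := tendsto_pow_atTop_nhds_zero_of_lt_one (r := (1/2 : ℝ)) (by norm_num) (by norm_num)
    have hlen : Tendsto (fun n : ℕ => t - s + (1/2 : ℝ) ^ n) atTop (𝓝 (t - s)) := by
      simpa using tendsto_const_nhds.add hmesh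
    exact ((Real.continuousAt_rpow_const (t - s) μ (Or.inr (by linarith))).tendsto.comp
      hlen).const_mul (C + 2 * K)
  rw [← norm_sub_rev]
  exact le_of_tendsto_of_tendsto' hL hR fun n =>
    hg.norm_gridSum_sub_gridSum_sub_le hdiag hμ hK hC0 hC (hΔ n) hs hst htT

/-- The decomposition says nothing about `(δ₂g)_{s,t,s} = -(g s t + g t s)`, hence the detour
through the midpoint. -/
lemma norm_add_swap_le (hg : SewingBound g T μ K) (hK : 0 ≤ K) (hμ : 0 ≤ μ) {s t : ℝ}
    (hs : s ∈ Icc (0:ℝ) T) (ht : t ∈ Icc (0:ℝ) T) : ‖g s t + g t s‖ ≤ 2 * K * |s - t| ^ μ := by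
  set m := (s + t) / 2
  have hm : m ∈ Icc (0:ℝ) T := by
    simp only [m, mem_Icc]
    constructor <;> linarith [hs.1, hs.2, ht.1, ht.2]
  have hsm : |s - m| = |s - t| / 2 := by
    rw [show s - m = (s - t) / 2 by ring, abs_div, abs_two]
  have htm : |t - m| = |s - t| / 2 := by
    rw [show t - m = -((s - t) / 2) by ring, abs_neg, abs_div, abs_two]
  have h₁ := hg s hs t ht m hm (by rw [hsm, htm])
  have h₂ := hg t ht s hs m hm (by rw [hsm, htm])
  have hpow : K * (|s - t| / 2) ^ μ ≤ K * |s - t| ^ μ := by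
    gcongr
    linarith [abs_nonneg (s - t)]
  calc ‖g s t + g t s‖ = ‖(g s m - g s t - g t m) + (g t m - g t s - g s m)‖ := by
        rw [← norm_neg]; congr 1; abel
    _ ≤ K * |s - m| ^ μ + K * |t - m| ^ μ := norm_add_le_of_le h₁ h₂
    _ ≤ 2 * K * |s - t| ^ μ := by rw [hsm, htm]; linarith

theorem exists_norm_sub_sub_le [CompleteSpace E] (hg : SewingBound g T μ K)
    (hdiag : ∀ t ∈ Icc (0:ℝ) T, g t t = 0) (hμ : 1 < μ) (hK : 0 ≤ K) :
    ∃ (I : ℝ → E) (C : ℝ), ∀ s ∈ Icc (0:ℝ) T, ∀ t ∈ Icc (0:ℝ) T,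
      ‖g s t - (I t - I s)‖ ≤ C * |t - s| ^ μ := by
  obtain ⟨I, C, hI⟩ := hg.exists_norm_sub_sub_le_of_le hdiag hμ hK
  refine ⟨I, C + 2 * K, fun s hs t ht => ?_⟩
  rcases le_total s t with hst | hts
  · rw [abs_of_nonneg (sub_nonneg.2 hst)]
    have := hI s t hs.1 hst ht.2
    nlinarith [Real.rpow_nonneg (sub_nonneg.2 hst) μ]
  · have hswap := hg.norm_add_swap_le hK (by linarith) hs ht
    rw [abs_of_nonneg (sub_nonneg.2 hts)] at hswap
    rw [abs_sub_comm, abs_of_nonneg (sub_nonneg.2 hts)]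
    calc ‖g s t - (I t - I s)‖ = ‖(g s t + g t s) - (g t s - (I s - I t))‖ := by
          congr 1; abel
      _ ≤ 2 * K * (s - t) ^ μ + C * (s - t) ^ μ :=
          norm_sub_le_of_le hswap (hI t s ht.1 hts hs.2)
      _ = (C + 2 * K) * (s - t) ^ μ := by ring

end SewingBound

lemma continuousWithinAt_of_norm_sub_sub_le {S : Set ℝ} {I : ℝ → E} {s : ℝ} (hμ : 0 < μ)
    (hgs : ContinuousWithinAt (g s) S s) (hss : g s s = 0)
    (hI : ∀ t ∈ S, ‖g s t - (I t - I s)‖ ≤ C * |t - s| ^ μ) : ContinuousWithinAt I S s := by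
  have hbound : Tendsto (fun t => C * |t - s| ^ μ) (𝓝[S] s) (𝓝 0) := by
    have hc : Continuous fun t : ℝ => C * |t - s| ^ μ :=
      continuous_const.mul ((continuous_abs.comp (continuous_id.sub continuous_const)).rpow_const
        fun _ => Or.inr hμ.le)
    simpa [Real.zero_rpow hμ.ne'] using (hc.tendsto s).mono_left nhdsWithin_le_nhds
  have hR : Tendsto (fun t => g s t - (I t - I s)) (𝓝[S] s) (𝓝 0) :=
    squeeze_zero_norm' (eventually_nhdsWithin_of_forall hI) hbound
  rw [ContinuousWithinAt, hss] at hgs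
  rw [ContinuousWithinAt, ← tendsto_sub_nhds_zero_iff]
  simpa using hgs.sub hR

lemma eq_of_norm_sub_le_rpow {F : ℝ → E} {A t : ℝ} (hμ : 1 < μ) (ht : 0 ≤ t)
    (hF : ∀ a b, 0 ≤ a → a ≤ b → b ≤ t → ‖F b - F a‖ ≤ A * (b - a) ^ μ) : F t = F 0 := by
  set A' := max A 0
  have hr : (1/2 : ℝ) ^ (μ - 1) < 1 := Real.rpow_lt_one (by norm_num) (by norm_num) (by linarith)
  have hbound : ∀ n : ℕ, ‖F t - F 0‖ ≤ A' * (t + 1) * ((1/2 : ℝ) ^ (μ - 1)) ^ n := fun n => by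
    have hΔ : 0 < (1/2 : ℝ) ^ n := by positivity
    have h := norm_sub_sub_gridSum_le (g := fun _ _ => (0 : E)) (F := F)
      (ε := A' * ((1/2 : ℝ) ^ n) ^ μ) hΔ ht fun a b ha hab hbt hba => by
        rw [sub_zero]
        exact (hF a b ha hab hbt).trans (mul_le_mul (le_max_left _ _)
          (Real.rpow_le_rpow (by linarith) hba (by linarith)) (by positivity) (le_max_right _ _))
    rw [show gridSum (fun _ _ => (0 : E)) ((1/2 : ℝ) ^ n) t = 0 by simp [gridSum], sub_zero] at h
    refine (h.trans (floor_div_add_one_mul_rpow_le ht hΔ (le_max_right _ _))).trans ?_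
    rw [← Real.rpow_pow_comm (by norm_num)]
    have : (1/2 : ℝ) ^ n ≤ 1 := pow_le_one₀ (by norm_num) (by norm_num)
    have : 0 ≤ A' := le_max_right _ _
    gcongr
  have hlim : Tendsto (fun n : ℕ => A' * (t + 1) * ((1/2 : ℝ) ^ (μ - 1)) ^ n) atTop (𝓝 0) := by
    simpa using (tendsto_pow_atTop_nhds_zero_of_lt_one (by positivity) hr).const_mul (A' * (t + 1))
  exact sub_eq_zero.1 (norm_le_zero_iff.1 (ge_of_tendsto' hlim hbound))

lemma eq_add_const_of_norm_sub_sub_le {I J : ℝ → E} {C' : ℝ} (hμ : 1 < μ)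
    (hI : ∀ s ∈ Icc (0:ℝ) T, ∀ t ∈ Icc (0:ℝ) T, ‖g s t - (I t - I s)‖ ≤ C * |t - s| ^ μ)
    (hJ : ∀ s ∈ Icc (0:ℝ) T, ∀ t ∈ Icc (0:ℝ) T, ‖g s t - (J t - J s)‖ ≤ C' * |t - s| ^ μ)
    {t : ℝ} (ht : t ∈ Icc (0:ℝ) T) : J t = I t + (J 0 - I 0) := by
  have h := eq_of_norm_sub_le_rpow (F := J - I) (A := C + C') hμ ht.1 fun a b ha hab hbt => by
    have ha' : a ∈ Icc (0:ℝ) T := ⟨ha, by linarith [ht.2]⟩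
    have hb' : b ∈ Icc (0:ℝ) T := ⟨ha.trans hab, hbt.trans ht.2⟩
    rw [← abs_of_nonneg (sub_nonneg.2 hab)]
    calc ‖(J - I) b - (J - I) a‖ = ‖(g a b - (I b - I a)) - (g a b - (J b - J a))‖ := by
          simp only [Pi.sub_apply]; congr 1; abel
      _ ≤ C * |b - a| ^ μ + C' * |b - a| ^ μ := norm_sub_le_of_le (hI a ha' b hb') (hJ a ha' b hb')
      _ = (C + C') * |b - a| ^ μ := by ring
  simp only [Pi.sub_apply] at h
  rw [← h]
  abel

end Sewing

lemma exists_bound_of_bddAbove_threeParQuotSet {α β T : ℝ} {h : ℝ → ℝ → ℝ → ℝ}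
    (hb : BddAbove (threeParQuotSet α β T h)) :
    ∃ c, 0 ≤ c ∧ ∀ s ∈ Icc (0:ℝ) T, ∀ u ∈ Icc (0:ℝ) T, ∀ t ∈ Icc (0:ℝ) T, u ≠ s → t ≠ s →
      |h t u s| ≤ c * (|u - s| ^ α * |t - s| ^ β) := by
  obtain ⟨c, hc⟩ := hb
  refine ⟨max c 0, le_max_right _ _, fun s hs u hu t ht hus hts => ?_⟩
  have hpos : 0 < |u - s| ^ α * |t - s| ^ β :=
    mul_pos (Real.rpow_pos_of_pos (abs_pos.2 (sub_ne_zero.2 hus)) _)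
      (Real.rpow_pos_of_pos (abs_pos.2 (sub_ne_zero.2 hts)) _)
  have hq := hc ⟨s, hs, u, hu, t, ht, rfl⟩
  rw [div_le_iff₀ hpos] at hq
  exact hq.trans (mul_le_mul_of_nonneg_right (le_max_left _ _) hpos.le)

lemma exists_sewingBound_of_sum_eq {g : ℝ → ℝ → ℝ} {T μ : ℝ} {n : ℕ}
    {h : Fin n → ℝ → ℝ → ℝ → ℝ} {ρ : Fin n → ℝ} (hgdiag : ∀ t ∈ Icc (0:ℝ) T, g t t = 0)
    (hρ : ∀ i, ρ i ∈ Ioo (0:ℝ) μ)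
    (hdec : ∀ t₁ ∈ Icc (0:ℝ) T, ∀ t₂ ∈ Icc (0:ℝ) T, ∀ t₃ ∈ Icc (0:ℝ) T,
      -g t₂ t₃ + g t₁ t₃ - g t₁ t₂ = ∑ i, h i t₁ t₂ t₃)
    (hbdd : ∀ i, BddAbove (threeParQuotSet (ρ i) (μ - ρ i) T (h i))) :
    ∃ K, 0 ≤ K ∧ SewingBound g T μ K := by
  choose c hc0 hc using fun i => exists_bound_of_bddAbove_threeParQuotSet (hbdd i)
  have hK : 0 ≤ ∑ i, c i := Finset.sum_nonneg fun i _ => hc0 i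
  refine ⟨∑ i, c i, hK, fun s hs u hu t ht hut => ?_⟩
  rw [Real.norm_eq_abs]
  by_cases hut' : u = t
  · subst hut'
    rw [hgdiag u hu, sub_self, zero_sub, abs_neg, abs_zero]
    positivity
  have hst : s ≠ t := by
    rintro rfl
    rw [sub_self, abs_zero] at hut
    exact hut' (sub_eq_zero.1 (abs_nonpos_iff.1 hut))
  have hst' : 0 < |s - t| := abs_pos.2 (sub_ne_zero.2 hst)
  rw [show g s t - g s u - g u t = ∑ i, h i s u t by linarith [hdec s hs u hu t ht],
    Finset.sum_mul]
  refine (Finset.abs_sum_le_sum_abs _ _).trans (Finset.sum_le_sum fun i _ => ?_)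
  refine (hc i t ht u hu s hs hut' hst).trans (mul_le_mul_of_nonneg_left ?_ (hc0 i))
  calc |u - t| ^ ρ i * |s - t| ^ (μ - ρ i) ≤ |s - t| ^ ρ i * |s - t| ^ (μ - ρ i) := by
        gcongr
        exact (hρ i).1.le
    _ = |s - t| ^ μ := by rw [← Real.rpow_add hst', add_sub_cancel]

theorem stmt6_general (T μ : ℝ) (hμ : 1 < μ) (g : ℝ → ℝ → ℝ)
    (hgc : ContinuousOn (fun p : ℝ × ℝ => g p.1 p.2) (Icc 0 T ×ˢ Icc 0 T))
    (hgdiag : ∀ t ∈ Icc (0:ℝ) T, g t t = 0)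
    -- `‖δ₂ g‖_μ < ∞` : there is a finite decomposition `δ₂ g = Σ_i h^i` with
    -- `‖h^i‖_{ρ_i, μ - ρ_i} < ∞` and `0 < ρ_i < μ`
    (hfin : ∃ (n : ℕ) (h : Fin n → (ℝ → ℝ → ℝ → ℝ)) (ρ : Fin n → ℝ),
      (∀ i, ρ i ∈ Ioo (0:ℝ) μ) ∧
      (∀ t₁ ∈ Icc (0:ℝ) T, ∀ t₂ ∈ Icc (0:ℝ) T, ∀ t₃ ∈ Icc (0:ℝ) T,
        -g t₂ t₃ + g t₁ t₃ - g t₁ t₂ = ∑ i, h i t₁ t₂ t₃) ∧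
      (∀ i, BddAbove (threeParQuotSet (ρ i) (μ - ρ i) T (h i)))) :
    -- there is `I`, unique up to an additive constant, and `ℛ` of order `|t-s|^μ`
    -- with `g_{s,t} = I_t - I_s + ℛ_{s,t}`
    ∃ I : ℝ → ℝ, ContinuousOn I (Icc 0 T) ∧
      (∃ C : ℝ, ∀ s ∈ Icc (0:ℝ) T, ∀ t ∈ Icc (0:ℝ) T,
        |g s t - (I t - I s)| ≤ C * |t - s| ^ μ) ∧
      (∀ J : ℝ → ℝ, ContinuousOn J (Icc 0 T) →
        (∃ C : ℝ, ∀ s ∈ Icc (0:ℝ) T, ∀ t ∈ Icc (0:ℝ) T,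
          |g s t - (J t - J s)| ≤ C * |t - s| ^ μ) →
        ∃ c : ℝ, ∀ t ∈ Icc (0:ℝ) T, J t = I t + c) := by
  obtain ⟨n, h, ρ, hρ, hdec, hbdd⟩ := hfin
  obtain ⟨K, hK, hg⟩ := exists_sewingBound_of_sum_eq hgdiag hρ hdec hbdd
  obtain ⟨I, C, hI⟩ := hg.exists_norm_sub_sub_le hgdiag hμ hK
  have hgs : ∀ s ∈ Icc (0:ℝ) T, ContinuousOn (g s) (Icc 0 T) := fun s hs =>
    hgc.comp (Continuous.prodMk_right s).continuousOn fun t ht => ⟨hs, ht⟩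
  refine ⟨I, fun s hs => continuousWithinAt_of_norm_sub_sub_le (by linarith)
      (hgs s hs s hs) (hgdiag s hs) (hI s hs), ⟨C, hI⟩,
    fun J _ ⟨C', hJ⟩ => ⟨J 0 - I 0, fun t ht => eq_add_const_of_norm_sub_sub_le hμ hI hJ ht⟩⟩

/-- Sewing Lemma. -/
theorem stmt6 (T μ : ℝ) (hT : 0 < T) (hμ : 1 < μ) (g : ℝ → ℝ → ℝ)
    (hgc : ContinuousOn (fun p : ℝ × ℝ => g p.1 p.2) (Icc 0 T ×ˢ Icc 0 T))
    (hgdiag : ∀ t ∈ Icc (0:ℝ) T, g t t = 0)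
    -- `‖δ₂ g‖_μ < ∞` : there is a finite decomposition `δ₂ g = Σ_i h^i` with
    -- `‖h^i‖_{ρ_i, μ - ρ_i} < ∞` and `0 < ρ_i < μ`
    (hfin : ∃ (n : ℕ) (h : Fin n → (ℝ → ℝ → ℝ → ℝ)) (ρ : Fin n → ℝ),
      (∀ i, ρ i ∈ Ioo (0:ℝ) μ) ∧
      (∀ t₁ ∈ Icc (0:ℝ) T, ∀ t₂ ∈ Icc (0:ℝ) T, ∀ t₃ ∈ Icc (0:ℝ) T,
        -g t₂ t₃ + g t₁ t₃ - g t₁ t₂ = ∑ i, h i t₁ t₂ t₃) ∧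
      (∀ i, BddAbove (threeParQuotSet (ρ i) (μ - ρ i) T (h i)))) :
    -- there is `I`, unique up to an additive constant, and `ℛ` of order `|t-s|^μ`
    -- with `g_{s,t} = I_t - I_s + ℛ_{s,t}`
    ∃ I : ℝ → ℝ, ContinuousOn I (Icc 0 T) ∧
      (∃ C : ℝ, ∀ s ∈ Icc (0:ℝ) T, ∀ t ∈ Icc (0:ℝ) T,
        |g s t - (I t - I s)| ≤ C * |t - s| ^ μ) ∧
      (∀ J : ℝ → ℝ, ContinuousOn J (Icc 0 T) →
        (∃ C : ℝ, ∀ s ∈ Icc (0:ℝ) T, ∀ t ∈ Icc (0:ℝ) T,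
          |g s t - (J t - J s)| ≤ C * |t - s| ^ μ) →
        ∃ c : ℝ, ∀ t ∈ Icc (0:ℝ) T, J t = I t + c) :=
  stmt6_general T μ hμ g hgc hgdiag hfin
end

section
/- Let 1/3 < γ < 1/2, and let (X,𝕏) be a stochastically enhanced process such that almost surely X ∈ C^γ([0,T];ℝ^d), 𝕏 ∈ C^{2γ}([0,T]²; ℝ^{d×d}), and Chen's relation −𝕏_{u,t} + 𝕏_{s,t} − 𝕏_{s,u} = (X_u − X_s)(X_t − X_u)^⊤ holds for all s,u,t. Let Y be a real-valued process and Y' an ℝ^d-valued row-vector process such that almost surely Y, Y' are γ-Hölder continuous and R^Y_{s,t} := Y_t − Y_s − Y'_s·(X_t − X_s) satisfies ‖R^Y‖_{2γ} < ∞. Then almost surely the limit lim_{ε→0⁺} (1/ε) ∫_0^t ( Y_s (X_{s+ε} − X_s)^⊤ + Y'_s 𝕏_{s,s+ε} ) ds exists uniformly in t ∈ [0,T]. -/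
/-!
Write `Ξₛₜ = Yₛ (Xₜ - Xₛ) + Y'ₛ 𝕏ₛₜ`. Chen's relation turns the additivity defect into
`Ξₛₜ - Ξₛᵤ - Ξᵤₜ = -R^Y_{su} (Xₜ - Xᵤ) + (Y'ₛ - Y'ᵤ) 𝕏ᵤₜ`, which is `O(|t - s|^{3γ})` with
`3γ > 1`. Adding two boundary terms to `∫₀ᵗ Ξ_{r,r+h} dr` gives a function `F(h)` whose defect
`F(b + c) - F(b) - F(c)` is an integral of that defect, hence `O((b + c)^{3γ})`. An almost
additive `F` of this kind satisfies `F(nu) ≈ n F(u)` up to `O((nu)^{3γ})`; comparing `a` and `b`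
with a common small step `u` shows that `F(h)/h` is Cauchy as `h → 0⁺`, with bounds uniform in
`t ∈ [0,T]`, and the boundary terms contribute only `O(h^γ)` after division by `h`.
-/

open MeasureTheory Set Filter Topology Matrix

theorem tendsto_rpow_nhdsGT_zero {α : ℝ} (hα : 0 < α) :
    Tendsto (fun h : ℝ => h ^ α) (𝓝[>] 0) (𝓝 0) := by
  have := ((continuous_id.rpow_const fun _ => Or.inr hα.le).tendsto (0 : ℝ)).mono_left
    (nhdsWithin_le_nhds (s := Ioi 0))
  simpa [Real.zero_rpow hα.ne'] using this

theorem rpow_add_rpow_le_of_three_mul_le {p q θ : ℝ} (hq : 0 ≤ q) (hqp : q ≤ p)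
    (hp : 3 * p ≤ 2 * (p + q)) (hθ : 1 ≤ θ) :
    p ^ θ + q ^ θ ≤ (2 / 3) ^ (θ - 1) * (p + q) ^ θ := by
  have hθ' : 0 ≤ θ - 1 := by linarith
  have split : ∀ z : ℝ, 0 ≤ z → z ^ θ = z ^ (θ - 1) * z := fun z hz => by
    rw [← Real.rpow_add_one' hz (by linarith), sub_add_cancel]
  calc p ^ θ + q ^ θ = p ^ (θ - 1) * p + q ^ (θ - 1) * q := by
        rw [split p (hq.trans hqp), split q hq]
    _ ≤ p ^ (θ - 1) * p + p ^ (θ - 1) * q := by gcongr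
    _ = p ^ (θ - 1) * (p + q) := by ring
    _ ≤ (2 / 3 * (p + q)) ^ (θ - 1) * (p + q) := by gcongr <;> linarith
    _ = (2 / 3) ^ (θ - 1) * (p + q) ^ θ := by
        rw [Real.mul_rpow (by norm_num) (by linarith), split (p + q) (by linarith)]; ring

theorem UniformCauchySeqOn.exists_tendstoUniformlyOn {ι α β : Type*} [UniformSpace β]
    [CompleteSpace β] [Nonempty β] {F : ι → α → β} {p : Filter ι} [p.NeBot] {s : Set α}
    (hF : UniformCauchySeqOn F p s) : ∃ f, TendstoUniformlyOn F f p s :=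
  ⟨fun x => limUnder p (F · x), hF.tendstoUniformlyOn_of_tendsto fun _ hx =>
    tendsto_nhds_limUnder (CompleteSpace.complete (hF.cauchy_map hx))⟩

theorem uniformCauchySeqOn_of_norm_sub_le {ι α E : Type*} [SeminormedAddCommGroup E]
    {F : ι → α → E} {p : Filter ι} {s : Set α} {e : ι → ℝ} (he : Tendsto e p (𝓝 0))
    (hF : ∀ᶠ q in p ×ˢ p, ∀ x ∈ s, ‖F q.1 x - F q.2 x‖ ≤ e q.1 + e q.2) :
    UniformCauchySeqOn F p s := by
  intro u hu
  obtain ⟨ε, hε, hεu⟩ := Metric.mem_uniformity_dist.1 hu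
  have he₂ : Tendsto (fun q : ι × ι => e q.1 + e q.2) (p ×ˢ p) (𝓝 0) := by
    simpa using (he.comp tendsto_fst).add (he.comp tendsto_snd)
  filter_upwards [hF, he₂ (Iio_mem_nhds hε)] with q hq hqε x hx
  exact hεu (((dist_eq_norm _ _).trans_le (hq x hx)).trans_lt hqε)

theorem norm_vecMul_le_of_abs_le {m n : Type*} [Fintype m] [Fintype n] (v : m → ℝ)
    (A : Matrix m n ℝ) {B : ℝ} (hB : 0 ≤ B) (hA : ∀ i j, |A i j| ≤ B) :
    ‖v ᵥ* A‖ ≤ Fintype.card m * ‖v‖ * B := by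
  refine (pi_norm_le_iff_of_nonneg (by positivity)).2 fun j => ?_
  calc ‖(v ᵥ* A) j‖ = |∑ i, v i * A i j| := rfl
    _ ≤ ∑ i, |v i| * |A i j| := by
        simpa only [abs_mul] using Finset.abs_sum_le_sum_abs (fun i => v i * A i j) Finset.univ
    _ ≤ ∑ _i : m, ‖v‖ * B := Finset.sum_le_sum fun i _ =>
        mul_le_mul (norm_le_pi_norm v i) (hA i j) (abs_nonneg _) (norm_nonneg _)
    _ = Fintype.card m * ‖v‖ * B := by simp [mul_assoc]

theorem tendsto_mul_abs_sub_rpow_nhds (M : ℝ) {γ : ℝ} (hγ : 0 < γ) (s : ℝ) :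
    Tendsto (fun t => M * |t - s| ^ γ) (𝓝 s) (𝓝 0) := by
  have : Continuous fun t : ℝ => M * |t - s| ^ γ :=
    continuous_const.mul ((continuous_id.sub continuous_const).abs.rpow_const
      fun _ => Or.inr hγ.le)
  simpa [Real.zero_rpow hγ.ne'] using this.tendsto s

theorem continuous_of_dist_le_mul_rpow {α : Type*} [PseudoMetricSpace α] {f : ℝ → α} {M γ : ℝ}
    (hγ : 0 < γ) (hf : ∀ s t, dist (f t) (f s) ≤ M * |t - s| ^ γ) : Continuous f :=
  continuous_iff_continuousAt.2 fun s => tendsto_iff_dist_tendsto_zero.2 <|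
    squeeze_zero (fun _ => dist_nonneg) (hf s) (tendsto_mul_abs_sub_rpow_nhds M hγ s)

theorem le_mul_abs_sub_rpow_projIcc {a b C M α : ℝ} (hab : a ≤ b) (hα : 0 ≤ α) (hM : 0 ≤ M)
    (hCM : C ≤ M) {g : ℝ → ℝ → ℝ}
    (hg : ∀ s ∈ Icc a b, ∀ t ∈ Icc a b, g s t ≤ C * |t - s| ^ α) (s t : ℝ) :
    g (projIcc a b hab s) (projIcc a b hab t) ≤ M * |t - s| ^ α :=
  (hg _ (projIcc a b hab s).2 _ (projIcc a b hab t).2).trans <|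
    mul_le_mul hCM (Real.rpow_le_rpow (abs_nonneg _) (abs_projIcc_sub_projIcc hab) hα)
      (Real.rpow_nonneg (abs_nonneg _) _) hM

theorem norm_le_of_norm_sub_le_mul_rpow {E : Type*} [SeminormedAddCommGroup E] {f : ℝ → E}
    {a b C α : ℝ} (hα : 0 ≤ α) (hf : ∀ s ∈ Icc a b, ∀ t ∈ Icc a b, ‖f t - f s‖ ≤ C * |t - s| ^ α)
    {t : ℝ} (ht : t ∈ Icc a b) : ‖f t‖ ≤ ‖f a‖ + |C| * (b - a) ^ α := by
  have hpow : |t - a| ^ α ≤ (b - a) ^ α := Real.rpow_le_rpow (abs_nonneg _)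
    (by rw [abs_of_nonneg (by linarith [ht.1])]; linarith [ht.2]) hα
  calc ‖f t‖ ≤ ‖f a‖ + ‖f t - f a‖ := norm_le_insert' _ _
    _ ≤ ‖f a‖ + |C| * (b - a) ^ α := by
        gcongr
        exact (hf a (left_mem_Icc.2 (ht.1.trans ht.2)) t ht).trans (mul_le_mul (le_abs_self C)
          hpow (Real.rpow_nonneg (abs_nonneg _) _) (abs_nonneg _))

section AlmostAdditive

variable {E : Type*} [SeminormedAddCommGroup E] {f : ℝ → E} {K θ γ C : ℝ}

def IsAlmostAdditive (K θ : ℝ) (f : ℝ → E) : Prop :=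
  ∀ b c, 0 ≤ b → 0 ≤ c → b + c ≤ 1 → ‖f (b + c) - f b - f c‖ ≤ K * (b + c) ^ θ

namespace IsAlmostAdditive

/-- Splitting `n = ⌈n/2⌉ + ⌊n/2⌋` lets the errors add up geometrically, with ratio
`(2/3)^(θ-1) < 1`. -/
theorem norm_sub_nsmul_le (hf : IsAlmostAdditive K θ f) (hθ : 1 < θ) (hK : 0 ≤ K)
    {u : ℝ} (hu : 0 ≤ u) (n : ℕ) (hn : 1 ≤ n) (hnu : n * u ≤ 1) :
    ‖f (n * u) - n • f u‖ ≤ K / (1 - (2 / 3) ^ (θ - 1)) * (n * u) ^ θ := by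
  set κ : ℝ := (2 / 3) ^ (θ - 1)
  have hκ : κ < 1 := Real.rpow_lt_one (by norm_num) (by norm_num) (by linarith)
  have hK' : 0 ≤ K / (1 - κ) := div_nonneg hK (by linarith)
  induction n using Nat.strong_induction_on with
  | _ n ih =>
  obtain rfl | hn2 : n = 1 ∨ 2 ≤ n := by omega
  · simpa using mul_nonneg hK' (Real.rpow_nonneg hu θ)
  set p := (n + 1) / 2 with hp
  set q := n / 2 with hq
  have hpq : (p : ℝ) * u + q * u = n * u := by
    rw [← add_mul, ← Nat.cast_add, show p + q = n by omega]
  have hpu : (p : ℝ) * u ≤ 1 := le_trans (by gcongr; omega) hnu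
  have hqu : (q : ℝ) * u ≤ 1 := le_trans (by gcongr; omega) hnu
  have hsplit := hf (p * u) (q * u) (by positivity) (by positivity) (hpq ▸ hnu)
  have hgeom : (p * u : ℝ) ^ θ + (q * u) ^ θ ≤ κ * (n * u) ^ θ := by
    rw [← hpq]
    refine rpow_add_rpow_le_of_three_mul_le (by positivity) (by gcongr; omega) ?_ hθ.le
    have : (3 * p : ℝ) ≤ 2 * n := by exact_mod_cast (show 3 * p ≤ 2 * n by omega)
    rw [hpq]; nlinarith
  have hnsmul : n • f u = p • f u + q • f u := by rw [← add_nsmul]; congr 1; omega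
  rw [hpq] at hsplit
  calc ‖f (n * u) - n • f u‖
      = ‖(f (n * u) - f (p * u) - f (q * u)) + (f (p * u) - p • f u)
          + (f (q * u) - q • f u)‖ := by rw [hnsmul]; congr 1; abel
    _ ≤ K * (n * u) ^ θ + K / (1 - κ) * (p * u) ^ θ + K / (1 - κ) * (q * u) ^ θ :=
        norm_add₃_le.trans (add_le_add_three hsplit (ih p (by omega) (by omega) hpu)
          (ih q (by omega) (by omega) hqu))
    _ ≤ K * (n * u) ^ θ + K / (1 - κ) * (κ * (n * u) ^ θ) := by
        rw [add_assoc, ← mul_add]; gcongr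
    _ = K / (1 - κ) * (n * u) ^ θ := by field_simp [show 1 - κ ≠ 0 by linarith]; ring

variable [NormedSpace ℝ E]

theorem norm_inv_smul_sub_inv_smul_le_of_le (hf : IsAlmostAdditive K θ f) (hθ : 1 < θ)
    (hK : 0 ≤ K) (hC : 0 ≤ C) (hγ : 0 ≤ γ) (hsmall : ∀ h, 0 ≤ h → h ≤ 1 → ‖f h‖ ≤ C * h ^ γ)
    {b u : ℝ} (hu : 0 < u) (hub : u ≤ b) (hb : b ≤ 1) :
    ‖b⁻¹ • f b - u⁻¹ • f u‖
      ≤ (K + K / (1 - (2 / 3) ^ (θ - 1))) * b ^ (θ - 1) + 2 * C * u ^ γ / b := by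
  set K' := K / (1 - (2 / 3) ^ (θ - 1))
  have hb0 : 0 < b := hu.trans_le hub
  set k := ⌊b / u⌋₊
  have hk : 1 ≤ k := Nat.le_floor (by rw [Nat.cast_one, le_div_iff₀ hu]; linarith)
  have hku : k * u ≤ b := (le_div_iff₀ hu).1 (Nat.floor_le (by positivity))
  have hr : b - k * u < u := by
    have := Nat.lt_floor_add_one (b / u)
    rw [div_lt_iff₀ hu] at this
    linarith
  have hfb : ‖f b - k • f u‖ ≤ (K + K') * b ^ θ + C * u ^ γ := by
    have hsplit := hf (k * u) (b - k * u) (by positivity) (by linarith) (by linarith)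
    rw [add_sub_cancel] at hsplit
    calc ‖f b - k • f u‖
        = ‖(f b - f (k * u) - f (b - k * u)) + (f (k * u) - k • f u) + f (b - k * u)‖ := by
          congr 1; abel
      _ ≤ K * b ^ θ + K' * (k * u) ^ θ + C * (b - k * u) ^ γ :=
          norm_add₃_le.trans (add_le_add_three hsplit
            (hf.norm_sub_nsmul_le hθ hK hu.le k hk (hku.trans hb))
            (hsmall _ (by linarith) (by linarith)))
      _ ≤ K * b ^ θ + K' * b ^ θ + C * u ^ γ := by
          have : 0 ≤ K' := div_nonneg hK (sub_nonneg.2 (Real.rpow_le_one (by norm_num)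
            (by norm_num) (by linarith)))
          gcongr
      _ = (K + K') * b ^ θ + C * u ^ γ := by ring
  have hcoef : ‖(k / b - u⁻¹ : ℝ)‖ ≤ b⁻¹ := by
    have : (k / b - u⁻¹ : ℝ) = -((b - k * u) / (u * b)) := by field_simp; ring
    rw [this, norm_neg, Real.norm_of_nonneg (by positivity), div_le_iff₀ (by positivity)]
    field_simp
    linarith
  calc ‖b⁻¹ • f b - u⁻¹ • f u‖ = ‖b⁻¹ • (f b - k • f u) + (k / b - u⁻¹ : ℝ) • f u‖ := by
        rw [← Nat.cast_smul_eq_nsmul ℝ]; congr 1; module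
    _ ≤ b⁻¹ * ((K + K') * b ^ θ + C * u ^ γ) + b⁻¹ * (C * u ^ γ) := by
        refine (norm_add_le _ _).trans (add_le_add ?_ ?_) <;> rw [norm_smul]
        · rw [Real.norm_of_nonneg (by positivity)]; gcongr
        · gcongr; exact hsmall u hu.le (hub.trans hb)
    _ = (K + K') * b ^ (θ - 1) + 2 * C * u ^ γ / b := by
        rw [Real.rpow_sub_one hb0.ne']; field_simp; ring

theorem norm_inv_smul_sub_inv_smul_le (hf : IsAlmostAdditive K θ f) (hθ : 1 < θ)
    (hK : 0 ≤ K) (hC : 0 ≤ C) (hγ : 0 < γ) (hsmall : ∀ h, 0 ≤ h → h ≤ 1 → ‖f h‖ ≤ C * h ^ γ)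
    {a b : ℝ} (ha : 0 < a) (ha1 : a ≤ 1) (hb : 0 < b) (hb1 : b ≤ 1) :
    ‖a⁻¹ • f a - b⁻¹ • f b‖
      ≤ (K + K / (1 - (2 / 3) ^ (θ - 1))) * (a ^ (θ - 1) + b ^ (θ - 1)) := by
  set K' := K + K / (1 - (2 / 3) ^ (θ - 1))
  have hlim : Tendsto (fun u => K' * (a ^ (θ - 1) + b ^ (θ - 1))
      + (2 * C * u ^ γ / a + 2 * C * u ^ γ / b)) (𝓝[>] 0)
      (𝓝 (K' * (a ^ (θ - 1) + b ^ (θ - 1)))) := by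
    have h := ((tendsto_rpow_nhdsGT_zero hγ).const_mul (2 * C))
    simpa using tendsto_const_nhds.add ((h.div_const a).add (h.div_const b))
  refine ge_of_tendsto hlim ?_
  filter_upwards [Ioc_mem_nhdsGT (lt_min ha hb)] with u ⟨hu, hua⟩
  calc ‖a⁻¹ • f a - b⁻¹ • f b‖ ≤ ‖a⁻¹ • f a - u⁻¹ • f u‖ + ‖b⁻¹ • f b - u⁻¹ • f u‖ := by
        rw [norm_sub_rev (b⁻¹ • f b)]; exact norm_sub_le_norm_sub_add_norm_sub _ _ _
    _ ≤ _ := by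
        have := hf.norm_inv_smul_sub_inv_smul_le_of_le hθ hK hC hγ.le hsmall hu
          (hua.trans (min_le_left _ _)) ha1
        have := hf.norm_inv_smul_sub_inv_smul_le_of_le hθ hK hC hγ.le hsmall hu
          (hua.trans (min_le_right _ _)) hb1
        linarith

end IsAlmostAdditive

end AlmostAdditive

section Germ

variable {E : Type*} [NormedAddCommGroup E] [NormedSpace ℝ E] {Ξ : ℝ → ℝ → E} {K θ C γ T : ℝ}

def germDelta (Ξ : ℝ → ℝ → E) (s u t : ℝ) : E := Ξ s t - Ξ s u - Ξ u t

noncomputable def germIntegral (Ξ : ℝ → ℝ → E) (s h : ℝ) : E := ∫ r in s..s + h, Ξ s r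

/-- The two boundary terms are what make `h ↦ correctedIntegral Ξ h t` almost additive. -/
noncomputable def correctedIntegral (Ξ : ℝ → ℝ → E) (h t : ℝ) : E :=
  (∫ r in 0..t, Ξ r (r + h)) - germIntegral Ξ t h + germIntegral Ξ 0 h

theorem norm_germIntegral_le (hC : 0 ≤ C) (hγ : 0 ≤ γ)
    (hbound : ∀ s t, |t - s| ≤ 1 → ‖Ξ s t‖ ≤ C * |t - s| ^ γ) (s : ℝ) {h : ℝ} (h0 : 0 ≤ h)
    (h1 : h ≤ 1) : ‖germIntegral Ξ s h‖ ≤ C * h ^ γ * h := by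
  have := intervalIntegral.norm_integral_le_of_norm_le_const (a := s) (b := s + h)
    (C := C * h ^ γ) (f := Ξ s) fun r hr => ?_
  · simpa [germIntegral, abs_of_nonneg h0] using this
  rw [uIoc_of_le (by linarith)] at hr
  have hr' : |r - s| ≤ h := abs_le.2 ⟨by linarith [hr.1], by linarith [hr.2]⟩
  calc ‖Ξ s r‖ ≤ C * |r - s| ^ γ := hbound s r (hr'.trans h1)
    _ ≤ C * h ^ γ := by gcongr

theorem norm_integral_germDelta_le (hK : 0 ≤ K) (hθ : 0 ≤ θ)
    (hδ : ∀ s u t, s ≤ u → u ≤ t → ‖germDelta Ξ s u t‖ ≤ K * (t - s) ^ θ) (s : ℝ) {b c : ℝ}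
    (hb : 0 ≤ b) (hc : 0 ≤ c) :
    ‖∫ r in s..s + b, germDelta Ξ s r (r + c)‖ ≤ K * (b + c) ^ θ * b := by
  have := intervalIntegral.norm_integral_le_of_norm_le_const (a := s) (b := s + b)
    (C := K * (b + c) ^ θ) (f := fun r => germDelta Ξ s r (r + c)) fun r hr => ?_
  · simpa [abs_of_nonneg hb] using this
  rw [uIoc_of_le (by linarith)] at hr
  calc ‖germDelta Ξ s r (r + c)‖ ≤ K * (r + c - s) ^ θ := hδ _ _ _ hr.1.le (by linarith)
    _ ≤ K * (b + c) ^ θ := by gcongr <;> linarith [hr.1, hr.2]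

theorem norm_correctedIntegral_le (hC : 0 ≤ C) (hγ : 0 ≤ γ)
    (hbound : ∀ s t, |t - s| ≤ 1 → ‖Ξ s t‖ ≤ C * |t - s| ^ γ) {t : ℝ} (ht : t ∈ Icc 0 T)
    {h : ℝ} (h0 : 0 ≤ h) (h1 : h ≤ 1) : ‖correctedIntegral Ξ h t‖ ≤ (T + 2) * C * h ^ γ := by
  have hmain : ‖∫ r in 0..t, Ξ r (r + h)‖ ≤ C * h ^ γ * T := by
    have := intervalIntegral.norm_integral_le_of_norm_le_const (a := 0) (b := t)
      (C := C * h ^ γ) (f := fun r => Ξ r (r + h)) fun r _ => by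
        simpa [abs_of_nonneg h0] using hbound r (r + h) (by simpa [abs_of_nonneg h0] using h1)
    rw [sub_zero, abs_of_nonneg ht.1] at this
    exact this.trans (by gcongr; exact ht.2)
  have hbound' : ∀ s, ‖germIntegral Ξ s h‖ ≤ C * h ^ γ :=
    fun s => (norm_germIntegral_le hC hγ hbound s h0 h1).trans
      (mul_le_of_le_one_right (by positivity) h1)
  calc ‖correctedIntegral Ξ h t‖ ≤ C * h ^ γ * T + C * h ^ γ + C * h ^ γ :=
        (norm_add_le _ _).trans (add_le_add ((norm_sub_le _ _).trans
          (add_le_add hmain (hbound' t))) (hbound' 0))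
    _ = (T + 2) * C * h ^ γ := by ring

theorem norm_inv_smul_correctedIntegral_sub_le (hC : 0 ≤ C) (hγ : 0 ≤ γ)
    (hbound : ∀ s t, |t - s| ≤ 1 → ‖Ξ s t‖ ≤ C * |t - s| ^ γ) (t : ℝ) {h : ℝ} (h0 : 0 < h)
    (h1 : h ≤ 1) :
    ‖h⁻¹ • correctedIntegral Ξ h t - h⁻¹ • ∫ r in 0..t, Ξ r (r + h)‖ ≤ 2 * C * h ^ γ := by
  have hbound' := fun s => norm_germIntegral_le hC hγ hbound s h0.le h1
  calc _ = h⁻¹ * ‖germIntegral Ξ 0 h - germIntegral Ξ t h‖ := by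
        rw [← smul_sub, norm_smul, Real.norm_of_nonneg (by positivity), correctedIntegral]
        congr 2; abel
    _ ≤ h⁻¹ * (C * h ^ γ * h + C * h ^ γ * h) := by
        gcongr; exact (norm_sub_le _ _).trans (add_le_add (hbound' 0) (hbound' t))
    _ = 2 * C * h ^ γ := by field_simp; ring

variable (hΞ : Continuous (Function.uncurry Ξ))
include hΞ

theorem integral_shift_eq_germIntegral_sub (s b c : ℝ) :
    ∫ r in s..s + b, Ξ r (r + c) = germIntegral Ξ s (b + c) - germIntegral Ξ s b
      - germIntegral Ξ s c - ∫ r in s..s + b, germDelta Ξ s r (r + c) := by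
  have hint : ∀ {g : ℝ → E}, Continuous g → ∀ a a', IntervalIntegrable g volume a a' :=
    fun hg => hg.intervalIntegrable
  have hshift : ∫ r in s..s + b, Ξ s (r + c) = germIntegral Ξ s (b + c) - germIntegral Ξ s c := by
    rw [intervalIntegral.integral_comp_add_right (Ξ s), germIntegral, germIntegral,
      intervalIntegral.integral_interval_sub_left (hint (by fun_prop) _ _)
        (hint (by fun_prop) _ _), add_assoc]
  have hsplit : ∫ r in s..s + b, Ξ r (r + c) = (∫ r in s..s + b, Ξ s (r + c))
      - (∫ r in s..s + b, Ξ s r) - ∫ r in s..s + b, germDelta Ξ s r (r + c) := by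
    rw [← intervalIntegral.integral_sub (hint (by fun_prop) _ _) (hint (by fun_prop) _ _),
      ← intervalIntegral.integral_sub (hint (by fun_prop) _ _)
        (hint (by simp only [germDelta]; fun_prop) _ _)]
    congr 1; ext r
    simp only [germDelta]; abel
  rw [hsplit, hshift, ← germIntegral, sub_right_comm _ (germIntegral Ξ s c)]

theorem correctedIntegral_add_sub_sub (b c t : ℝ) :
    correctedIntegral Ξ (b + c) t - correctedIntegral Ξ b t - correctedIntegral Ξ c t
      = (∫ r in 0..t, germDelta Ξ r (r + b) (r + (b + c)))
        - (∫ r in t..t + b, germDelta Ξ t r (r + c))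
        + ∫ r in 0..0 + b, germDelta Ξ 0 r (r + c) := by
  have hint : ∀ {g : ℝ → E}, Continuous g → ∀ a a', IntervalIntegrable g volume a a' :=
    fun hg a a' => hg.intervalIntegrable a a'
  have hsum : ∫ r in 0..t, Ξ r (r + (b + c)) = (∫ r in 0..t, Ξ r (r + b))
      + (∫ r in 0..t, Ξ (r + b) (r + b + c))
      + ∫ r in 0..t, germDelta Ξ r (r + b) (r + (b + c)) := by
    rw [← intervalIntegral.integral_add (hint (by fun_prop) _ _) (hint (by fun_prop) _ _),
      ← intervalIntegral.integral_add (hint (by fun_prop) _ _)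
        (hint (by simp only [germDelta]; fun_prop) _ _)]
    congr 1; ext r
    simp only [germDelta, ← add_assoc]; abel
  have hmove : ∫ r in 0..t, Ξ (r + b) (r + b + c) = (∫ r in 0..t, Ξ r (r + c))
      + (∫ r in t..t + b, Ξ r (r + c)) - ∫ r in 0..0 + b, Ξ r (r + c) := by
    rw [intervalIntegral.integral_comp_add_right (fun r => Ξ r (r + c)),
      ← intervalIntegral.integral_interval_sub_left (hint (by fun_prop) _ _)
        (hint (by fun_prop) _ _), intervalIntegral.integral_add_adjacent_intervals
        (hint (by fun_prop) _ _) (hint (by fun_prop) _ _), add_comm t b]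
  rw [correctedIntegral, correctedIntegral, correctedIntegral, hsum, hmove,
    integral_shift_eq_germIntegral_sub hΞ t, integral_shift_eq_germIntegral_sub hΞ 0]
  abel


theorem isAlmostAdditive_correctedIntegral (hK : 0 ≤ K) (hθ : 0 ≤ θ)
    (hδ : ∀ s u t, s ≤ u → u ≤ t → ‖germDelta Ξ s u t‖ ≤ K * (t - s) ^ θ) {t : ℝ}
    (ht : t ∈ Icc 0 T) :
    IsAlmostAdditive ((T + 2) * K) θ fun h => correctedIntegral Ξ h t := by
  intro b c hb hc hbc
  have hmain : ‖∫ r in 0..t, germDelta Ξ r (r + b) (r + (b + c))‖ ≤ K * (b + c) ^ θ * T := by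
    have := intervalIntegral.norm_integral_le_of_norm_le_const (a := 0) (b := t)
      (C := K * (b + c) ^ θ) (f := fun r => germDelta Ξ r (r + b) (r + (b + c))) fun r _ => by
        simpa using hδ r (r + b) (r + (b + c)) (by linarith) (by linarith)
    rw [sub_zero, abs_of_nonneg ht.1] at this
    exact this.trans (by gcongr; exact ht.2)
  have hbound : ∀ s, ‖∫ r in s..s + b, germDelta Ξ s r (r + c)‖ ≤ K * (b + c) ^ θ :=
    fun s => (norm_integral_germDelta_le hK hθ hδ s hb hc).trans
      (mul_le_of_le_one_right (by positivity) (by linarith))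
  rw [correctedIntegral_add_sub_sub hΞ]
  calc _ ≤ K * (b + c) ^ θ * T + K * (b + c) ^ θ + K * (b + c) ^ θ :=
        (norm_add_le _ _).trans (add_le_add ((norm_sub_le _ _).trans
          (add_le_add hmain (hbound t))) (hbound 0))
    _ = (T + 2) * K * (b + c) ^ θ := by ring

theorem exists_tendstoUniformlyOn_inv_smul_integral [CompleteSpace E] (hθ : 1 < θ) (hγ : 0 < γ)
    (hK : 0 ≤ K) (hC : 0 ≤ C)
    (hδ : ∀ s u t, s ≤ u → u ≤ t → ‖germDelta Ξ s u t‖ ≤ K * (t - s) ^ θ)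
    (hbound : ∀ s t, |t - s| ≤ 1 → ‖Ξ s t‖ ≤ C * |t - s| ^ γ) (T : ℝ) :
    ∃ L : ℝ → E, TendstoUniformlyOn (fun h t => h⁻¹ • ∫ r in 0..t, Ξ r (r + h)) L (𝓝[>] 0)
      (Icc 0 T) := by
  set K' := (T + 2) * K + (T + 2) * K / (1 - (2 / 3) ^ (θ - 1))
  refine UniformCauchySeqOn.exists_tendstoUniformlyOn (uniformCauchySeqOn_of_norm_sub_le
    (e := fun h => K' * h ^ (θ - 1) + 2 * C * h ^ γ) ?_ ?_)
  · simpa using ((tendsto_rpow_nhdsGT_zero (by linarith)).const_mul K').add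
      ((tendsto_rpow_nhdsGT_zero hγ).const_mul (2 * C))
  filter_upwards [prod_mem_prod (Ioc_mem_nhdsGT one_pos) (Ioc_mem_nhdsGT one_pos)]
    with ⟨a, b⟩ ⟨⟨ha, ha1⟩, ⟨hb, hb1⟩⟩ t ht
  have hT : 0 ≤ T := ht.1.trans ht.2
  have hF := (isAlmostAdditive_correctedIntegral hΞ hK (by linarith) hδ ht)
    |>.norm_inv_smul_sub_inv_smul_le hθ (by positivity) (by positivity) hγ
      (fun h h0 h1 => norm_correctedIntegral_le hC hγ.le hbound ht h0 h1) ha ha1 hb hb1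
  have hFa := norm_inv_smul_correctedIntegral_sub_le hC hγ.le hbound t ha ha1
  have hFb := norm_inv_smul_correctedIntegral_sub_le hC hγ.le hbound t hb hb1
  set Fa := a⁻¹ • correctedIntegral Ξ a t
  set Fb := b⁻¹ • correctedIntegral Ξ b t
  calc ‖a⁻¹ • (∫ r in 0..t, Ξ r (r + a)) - b⁻¹ • ∫ r in 0..t, Ξ r (r + b)‖
      = ‖-(Fa - a⁻¹ • ∫ r in 0..t, Ξ r (r + a)) + (Fa - Fb)
          + (Fb - b⁻¹ • ∫ r in 0..t, Ξ r (r + b))‖ := by congr 1; abel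
    _ ≤ _ := norm_add₃_le.trans (by rw [norm_neg]; linarith)

end Germ

section RoughPath

variable {ι : Type*} [Fintype ι]

structure IsControlledRoughPath (γ M : ℝ) (x : ℝ → ι → ℝ) (xx : ℝ → ℝ → Matrix ι ι ℝ)
    (y : ℝ → ℝ) (y' : ℝ → ι → ℝ) : Prop where
  norm_sub_x_le : ∀ s t, ‖x t - x s‖ ≤ M * |t - s| ^ γ
  abs_xx_le : ∀ s t i j, |xx s t i j| ≤ M * |t - s| ^ (2 * γ)
  chen : ∀ s u t, -xx u t + xx s t - xx s u = vecMulVec (x u - x s) (x t - x u)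
  abs_sub_y_le : ∀ s t, |y t - y s| ≤ M * |t - s| ^ γ
  norm_sub_y'_le : ∀ s t, ‖y' t - y' s‖ ≤ M * |t - s| ^ γ
  abs_remainder_le : ∀ s t, |y t - y s - y' s ⬝ᵥ (x t - x s)| ≤ M * |t - s| ^ (2 * γ)
  abs_y_le : ∀ s, |y s| ≤ M
  norm_y'_le : ∀ s, ‖y' s‖ ≤ M

def roughGerm (x : ℝ → ι → ℝ) (xx : ℝ → ℝ → Matrix ι ι ℝ) (y : ℝ → ℝ) (y' : ℝ → ι → ℝ)
    (s t : ℝ) : ι → ℝ :=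
  y s • (x t - x s) + y' s ᵥ* xx s t

theorem germDelta_roughGerm {x : ℝ → ι → ℝ} {xx : ℝ → ℝ → Matrix ι ι ℝ} {y : ℝ → ℝ}
    {y' : ℝ → ι → ℝ}
    (hchen : ∀ s u t, -xx u t + xx s t - xx s u = vecMulVec (x u - x s) (x t - x u))
    (s u t : ℝ) :
    germDelta (roughGerm x xx y y') s u t
      = -(y u - y s - y' s ⬝ᵥ (x u - x s)) • (x t - x u) + (y' s - y' u) ᵥ* xx u t := by
  have hxx : xx s t = xx s u + xx u t + vecMulVec (x u - x s) (x t - x u) := by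
    rw [← hchen]; abel
  simp only [germDelta, roughGerm, hxx, vecMul_add, vecMul_vecMulVec, sub_vecMul]
  module

namespace IsControlledRoughPath

variable {γ M : ℝ} {x : ℝ → ι → ℝ} {xx : ℝ → ℝ → Matrix ι ι ℝ} {y : ℝ → ℝ} {y' : ℝ → ι → ℝ}
  (hR : IsControlledRoughPath γ M x xx y y')
include hR

theorem nonneg : 0 ≤ M := (abs_nonneg _).trans (hR.abs_y_le 0)

theorem continuous_x (hγ : 0 < γ) : Continuous x :=
  continuous_of_dist_le_mul_rpow hγ fun s t => by rw [dist_eq_norm]; exact hR.norm_sub_x_le s t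

theorem continuous_y (hγ : 0 < γ) : Continuous y :=
  continuous_of_dist_le_mul_rpow hγ fun s t => by rw [Real.dist_eq]; exact hR.abs_sub_y_le s t

theorem continuous_y' (hγ : 0 < γ) : Continuous y' :=
  continuous_of_dist_le_mul_rpow hγ fun s t => by rw [dist_eq_norm]; exact hR.norm_sub_y'_le s t

theorem tendsto_xx (hγ : 0 < γ) (s : ℝ) : Tendsto (xx s) (𝓝 s) (𝓝 0) :=
  tendsto_pi_nhds.2 fun i => tendsto_pi_nhds.2 fun j =>
    squeeze_zero_norm (fun t => hR.abs_xx_le s t i j)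
      (tendsto_mul_abs_sub_rpow_nhds M (by linarith) s)

/-- By Chen's relation, `𝕏` is determined by `x` and its first row `t ↦ 𝕏₀ₜ`, whose continuity
follows from the Hölder bound of `𝕏` near the diagonal. -/
theorem continuous_xx (hγ : 0 < γ) : Continuous (Function.uncurry xx) := by
  have hx := hR.continuous_x hγ
  have hrow : Continuous (xx 0) := continuous_iff_continuousAt.2 fun t₀ => by
    have hv : Tendsto (fun t => vecMulVec (x t₀ - x 0) (x t - x t₀)) (𝓝 t₀) (𝓝 0) := by
      simpa using ((continuous_const.matrix_vecMulVec (hx.sub continuous_const)).tendsto t₀ :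
        Tendsto (fun t => vecMulVec (x t₀ - x 0) (x t - x t₀)) _ _)
    have h := ((tendsto_const_nhds (x := xx 0 t₀)).add (hR.tendsto_xx hγ t₀)).add hv
    rw [add_zero, add_zero] at h
    refine h.congr fun t => ?_
    rw [← hR.chen 0 t₀ t]; abel
  have hxx : Function.uncurry xx = fun p : ℝ × ℝ =>
      xx 0 p.2 - xx 0 p.1 - vecMulVec (x p.1 - x 0) (x p.2 - x p.1) := by
    funext p; rw [← hR.chen 0 p.1 p.2]; abel
  rw [hxx]
  fun_prop

theorem continuous_roughGerm (hγ : 0 < γ) :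
    Continuous (Function.uncurry (roughGerm x xx y y')) := by
  have := hR.continuous_x hγ
  have := hR.continuous_y hγ
  have := hR.continuous_y' hγ
  have := hR.continuous_xx hγ
  unfold roughGerm
  fun_prop

theorem norm_roughGerm_le (hγ : 0 ≤ γ) {s t : ℝ} (hst : |t - s| ≤ 1) :
    ‖roughGerm x xx y y' s t‖ ≤ (1 + Fintype.card ι) * M ^ 2 * |t - s| ^ γ := by
  have hM := hR.nonneg
  have hpow : |t - s| ^ (2 * γ) ≤ |t - s| ^ γ :=
    Real.rpow_le_rpow_of_exponent_ge' (abs_nonneg _) hst hγ (by linarith)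
  have h1 : ‖y s • (x t - x s)‖ ≤ M * (M * |t - s| ^ γ) := by
    rw [norm_smul, Real.norm_eq_abs]
    exact mul_le_mul (hR.abs_y_le s) (hR.norm_sub_x_le s t) (norm_nonneg _) hM
  have h2 : ‖y' s ᵥ* xx s t‖ ≤ Fintype.card ι * M * (M * |t - s| ^ γ) :=
    (norm_vecMul_le_of_abs_le _ _ (by positivity) (hR.abs_xx_le s t)).trans
      (by gcongr; exact hR.norm_y'_le s)
  calc _ ≤ M * (M * |t - s| ^ γ) + Fintype.card ι * M * (M * |t - s| ^ γ) :=
        (norm_add_le _ _).trans (add_le_add h1 h2)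
    _ = _ := by ring

theorem norm_germDelta_roughGerm_le (hγ : 0 ≤ γ) {s u t : ℝ} (hsu : s ≤ u) (hut : u ≤ t) :
    ‖germDelta (roughGerm x xx y y') s u t‖
      ≤ (1 + Fintype.card ι) * M ^ 2 * (t - s) ^ (3 * γ) := by
  have hM := hR.nonneg
  have hmono : ∀ {a b α : ℝ}, 0 ≤ α → s ≤ a → a ≤ b → b ≤ t → |b - a| ^ α ≤ (t - s) ^ α :=
    fun hα ha hab hb =>
      Real.rpow_le_rpow (abs_nonneg _) (by rw [abs_of_nonneg (by linarith)]; linarith) hα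
  have hts : 0 ≤ t - s := by linarith
  have h1 : ‖-(y u - y s - y' s ⬝ᵥ (x u - x s)) • (x t - x u)‖
      ≤ M * (t - s) ^ (2 * γ) * (M * (t - s) ^ γ) := by
    rw [norm_smul, norm_neg, Real.norm_eq_abs]
    refine mul_le_mul ((hR.abs_remainder_le s u).trans ?_) ((hR.norm_sub_x_le u t).trans ?_)
      (norm_nonneg _) (mul_nonneg hM (Real.rpow_nonneg hts _))
    · exact mul_le_mul_of_nonneg_left (hmono (by linarith) le_rfl hsu hut) hM
    · exact mul_le_mul_of_nonneg_left (hmono hγ hsu hut le_rfl) hM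
  have h2 : ‖(y' s - y' u) ᵥ* xx u t‖
      ≤ Fintype.card ι * (M * (t - s) ^ γ) * (M * (t - s) ^ (2 * γ)) := by
    refine (norm_vecMul_le_of_abs_le _ _ (mul_nonneg hM (Real.rpow_nonneg hts _))
      fun i j => (hR.abs_xx_le u t i j).trans
        (mul_le_mul_of_nonneg_left (hmono (by linarith) hsu hut le_rfl) hM)).trans ?_
    rw [norm_sub_rev]
    gcongr
    exact (hR.norm_sub_y'_le s u).trans
      (mul_le_mul_of_nonneg_left (hmono hγ le_rfl hsu hut) hM)
  have hsplit : (t - s) ^ (3 * γ) = (t - s) ^ (2 * γ) * (t - s) ^ γ := by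
    rw [← Real.rpow_add_of_nonneg (by linarith) (by linarith) hγ]; ring_nf
  rw [germDelta_roughGerm hR.chen, hsplit]
  calc _ ≤ _ := (norm_add_le _ _).trans (add_le_add h1 h2)
    _ = _ := by ring

theorem exists_tendstoUniformlyOn_integral_roughGerm (hγ : 1 / 3 < γ) (T : ℝ) :
    ∃ L : ℝ → ι → ℝ, TendstoUniformlyOn
      (fun h t => h⁻¹ • ∫ r in 0..t, roughGerm x xx y y' r (r + h)) L (𝓝[>] 0) (Icc 0 T) :=
  exists_tendstoUniformlyOn_inv_smul_integral (hR.continuous_roughGerm (by linarith))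
    (by linarith : 1 < 3 * γ) (by linarith) (by positivity) (by positivity)
    (fun _ _ _ hsu hut => hR.norm_germDelta_roughGerm_le (by linarith) hsu hut)
    (fun _ _ hst => hR.norm_roughGerm_le (by linarith) hst) T

end IsControlledRoughPath

theorem isControlledRoughPath_comp_projIcc {T γ : ℝ} (hT : 0 ≤ T) (hγ : 0 ≤ γ)
    {x : ℝ → ι → ℝ} {xx : ℝ → ℝ → Matrix ι ι ℝ} {y : ℝ → ℝ} {y' : ℝ → ι → ℝ}
    (hx : ∃ C, ∀ s ∈ Icc 0 T, ∀ t ∈ Icc 0 T, ‖x t - x s‖ ≤ C * |t - s| ^ γ)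
    (hxx : ∃ C, ∀ s ∈ Icc 0 T, ∀ t ∈ Icc 0 T, ∀ i j, |xx s t i j| ≤ C * |t - s| ^ (2 * γ))
    (hchen : ∀ s ∈ Icc 0 T, ∀ u ∈ Icc 0 T, ∀ t ∈ Icc 0 T,
      -xx u t + xx s t - xx s u = vecMulVec (x u - x s) (x t - x u))
    (hy : ∃ C, ∀ s ∈ Icc 0 T, ∀ t ∈ Icc 0 T, |y t - y s| ≤ C * |t - s| ^ γ)
    (hy' : ∃ C, ∀ s ∈ Icc 0 T, ∀ t ∈ Icc 0 T, ‖y' t - y' s‖ ≤ C * |t - s| ^ γ)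
    (hR : ∃ C, ∀ s ∈ Icc 0 T, ∀ t ∈ Icc 0 T,
      |y t - y s - y' s ⬝ᵥ (x t - x s)| ≤ C * |t - s| ^ (2 * γ)) :
    ∃ M, IsControlledRoughPath γ M (fun t => x (projIcc 0 T hT t))
      (fun s t => xx (projIcc 0 T hT s) (projIcc 0 T hT t)) (fun t => y (projIcc 0 T hT t))
      (fun t => y' (projIcc 0 T hT t)) := by
  obtain ⟨Cx, hx⟩ := hx
  obtain ⟨Cxx, hxx⟩ := hxx
  obtain ⟨Cy, hy⟩ := hy
  obtain ⟨Cy', hy'⟩ := hy'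
  obtain ⟨CR, hR⟩ := hR
  have hy_norm : ∀ s ∈ Icc 0 T, ∀ t ∈ Icc 0 T, ‖y t - y s‖ ≤ Cy * |t - s| ^ γ := hy
  set M := max (max (max Cx Cxx) (max Cy (max Cy' CR)))
    (max (|y 0| + |Cy| * T ^ γ) (‖y' 0‖ + |Cy'| * T ^ γ))
  have hM : 0 ≤ M := le_max_of_le_right (le_max_of_le_left (by positivity))
  exact ⟨M,
    { norm_sub_x_le := le_mul_abs_sub_rpow_projIcc hT hγ hM (by simp [M]) hx
      abs_xx_le := fun s t i j => le_mul_abs_sub_rpow_projIcc hT (by positivity) hM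
        (by simp [M]) (fun s hs t ht => hxx s hs t ht i j) s t
      chen := fun s u t => hchen _ (projIcc 0 T hT s).2 _ (projIcc 0 T hT u).2 _
        (projIcc 0 T hT t).2
      abs_sub_y_le := le_mul_abs_sub_rpow_projIcc hT hγ hM (by simp [M]) hy
      norm_sub_y'_le := le_mul_abs_sub_rpow_projIcc hT hγ hM (by simp [M]) hy'
      abs_remainder_le := le_mul_abs_sub_rpow_projIcc hT (by positivity) hM (by simp [M]) hR
      abs_y_le := fun s => (norm_le_of_norm_sub_le_mul_rpow hγ hy_norm
        (projIcc 0 T hT s).2).trans (by simp [M])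
      norm_y'_le := fun s => (norm_le_of_norm_sub_le_mul_rpow hγ hy'
        (projIcc 0 T hT s).2).trans (by simp [M]) }⟩

end RoughPath

theorem stmt8_general {Ω : Type*} [MeasurableSpace Ω] (μ : Measure Ω)
    (T γ : ℝ) (hT : 0 < T) (hγl : 1/3 < γ) (d : ℕ)
    (X : ℝ → Ω → Fin d → ℝ) (XX : ℝ → ℝ → Ω → Matrix (Fin d) (Fin d) ℝ)
    (Y : ℝ → Ω → ℝ) (Y' : ℝ → Ω → Fin d → ℝ)
    (hXe : ∀ t ω, X t ω = X (min t T) ω)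
    (hXXe : ∀ s t ω, XX s t ω = XX (min s T) (min t T) ω)
    (hYe : ∀ t ω, Y t ω = Y (min t T) ω) (hY'e : ∀ t ω, Y' t ω = Y' (min t T) ω)
    -- almost surely: `X ∈ C^γ`, `𝕏 ∈ C^{2γ}`, Chen's relation, `Y, Y' ∈ C^γ`
    -- and `‖R^Y‖_{2γ} < ∞`
    (has : ∀ᵐ ω ∂μ,
      (∃ C : ℝ, ∀ s ∈ Icc (0:ℝ) T, ∀ t ∈ Icc (0:ℝ) T, ‖X t ω - X s ω‖ ≤ C * |t - s| ^ γ) ∧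
      (∃ C : ℝ, ∀ s ∈ Icc (0:ℝ) T, ∀ t ∈ Icc (0:ℝ) T, ∀ i j : Fin d,
        |XX s t ω i j| ≤ C * |t - s| ^ (2*γ)) ∧
      (∀ s ∈ Icc (0:ℝ) T, ∀ u ∈ Icc (0:ℝ) T, ∀ t ∈ Icc (0:ℝ) T,
        -XX u t ω + XX s t ω - XX s u ω = vecMulVec (X u ω - X s ω) (X t ω - X u ω)) ∧
      (∃ C : ℝ, ∀ s ∈ Icc (0:ℝ) T, ∀ t ∈ Icc (0:ℝ) T, |Y t ω - Y s ω| ≤ C * |t - s| ^ γ) ∧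
      (∃ C : ℝ, ∀ s ∈ Icc (0:ℝ) T, ∀ t ∈ Icc (0:ℝ) T, ‖Y' t ω - Y' s ω‖ ≤ C * |t - s| ^ γ) ∧
      (∃ C : ℝ, ∀ s ∈ Icc (0:ℝ) T, ∀ t ∈ Icc (0:ℝ) T,
        |Y t ω - Y s ω - Y' s ω ⬝ᵥ (X t ω - X s ω)| ≤ C * |t - s| ^ (2*γ))) :
    -- almost surely the rough integral approximations converge uniformly in `t ∈ [0,T]`
    ∀ᵐ ω ∂μ, ∃ L : ℝ → Fin d → ℝ,
      TendstoUniformlyOn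
        (fun (ε : ℝ) (t : ℝ) => (1/ε) • ∫ s in (0:ℝ)..t,
          (Y s ω • (X (s+ε) ω - X s ω) + Y' s ω ᵥ* XX s (s+ε) ω))
        L (𝓝[>] 0) (Icc 0 T) := by
  filter_upwards [has] with ω ⟨hX, hXX, hchen, hY, hY', hR⟩
  obtain ⟨M, hpath⟩ :=
    isControlledRoughPath_comp_projIcc hT.le (by linarith) hX hXX hchen hY hY' hR
  obtain ⟨L, hL⟩ := hpath.exists_tendstoUniformlyOn_integral_roughGerm hγl T
  refine ⟨L, hL.congr ?_⟩
  -- on `[0, ∞)` the clamped paths are the given ones, which are constant after `T`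
  have hcl : ∀ r, 0 ≤ r → (projIcc 0 T hT.le r : ℝ) = min r T := fun r hr => by
    simp [coe_projIcc, hr, hT.le, min_comm]
  filter_upwards [self_mem_nhdsWithin] with ε (hε : 0 < ε) t ht
  simp only [one_div]
  congr 1
  refine intervalIntegral.integral_congr fun s hs => ?_
  rw [uIcc_of_le ht.1] at hs
  simp only [roughGerm, hcl s hs.1, hcl (s + ε) (by linarith [hs.1]), ← hXe, ← hYe, ← hY'e,
    ← hXXe]

theorem stmt8 {Ω : Type*} [MeasurableSpace Ω] (μ : Measure Ω) [IsProbabilityMeasure μ]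
    (T γ : ℝ) (hT : 0 < T) (hγl : 1/3 < γ) (hγu : γ < 1/2) (d : ℕ)
    (X : ℝ → Ω → Fin d → ℝ) (XX : ℝ → ℝ → Ω → Matrix (Fin d) (Fin d) ℝ)
    (Y : ℝ → Ω → ℝ) (Y' : ℝ → Ω → Fin d → ℝ)
    (hXe : ∀ t ω, X t ω = X (min t T) ω)
    (hXXe : ∀ s t ω, XX s t ω = XX (min s T) (min t T) ω)
    (hYe : ∀ t ω, Y t ω = Y (min t T) ω) (hY'e : ∀ t ω, Y' t ω = Y' (min t T) ω)
    -- the second-order process vanishes on the diagonal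
    (hXXdiag : ∀ t ω, XX t t ω = 0)
    -- almost surely: `X ∈ C^γ`, `𝕏 ∈ C^{2γ}`, Chen's relation, `Y, Y' ∈ C^γ`
    -- and `‖R^Y‖_{2γ} < ∞`
    (has : ∀ᵐ ω ∂μ,
      (∃ C : ℝ, ∀ s ∈ Icc (0:ℝ) T, ∀ t ∈ Icc (0:ℝ) T, ‖X t ω - X s ω‖ ≤ C * |t - s| ^ γ) ∧
      (∃ C : ℝ, ∀ s ∈ Icc (0:ℝ) T, ∀ t ∈ Icc (0:ℝ) T, ∀ i j : Fin d,
        |XX s t ω i j| ≤ C * |t - s| ^ (2*γ)) ∧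
      (∀ s ∈ Icc (0:ℝ) T, ∀ u ∈ Icc (0:ℝ) T, ∀ t ∈ Icc (0:ℝ) T,
        -XX u t ω + XX s t ω - XX s u ω = vecMulVec (X u ω - X s ω) (X t ω - X u ω)) ∧
      (∃ C : ℝ, ∀ s ∈ Icc (0:ℝ) T, ∀ t ∈ Icc (0:ℝ) T, |Y t ω - Y s ω| ≤ C * |t - s| ^ γ) ∧
      (∃ C : ℝ, ∀ s ∈ Icc (0:ℝ) T, ∀ t ∈ Icc (0:ℝ) T, ‖Y' t ω - Y' s ω‖ ≤ C * |t - s| ^ γ) ∧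
      (∃ C : ℝ, ∀ s ∈ Icc (0:ℝ) T, ∀ t ∈ Icc (0:ℝ) T,
        |Y t ω - Y s ω - Y' s ω ⬝ᵥ (X t ω - X s ω)| ≤ C * |t - s| ^ (2*γ))) :
    -- almost surely the rough integral approximations converge uniformly in `t ∈ [0,T]`
    ∀ᵐ ω ∂μ, ∃ L : ℝ → Fin d → ℝ,
      TendstoUniformlyOn
        (fun (ε : ℝ) (t : ℝ) => (1/ε) • ∫ s in (0:ℝ)..t,
          (Y s ω • (X (s+ε) ω - X s ω) + Y' s ω ᵥ* XX s (s+ε) ω))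
        L (𝓝[>] 0) (Icc 0 T) :=
  stmt8_general μ T γ hT hγl d X XX Y Y' hXe hXXe hYe hY'e has
end
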